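/- Matrix Cramér–Rao lower bound: let (Ω, P) be a probability space and U, V : Ω → (Fin d → ℝ) random vectors all of whose components are square-integrable. Suppose the d×d matrix with entries ∫ U(ω) i · V(ω) j dP(ω) equals the identity matrix, and that the matrix F with entries F i j = ∫ V(ω) i · V(ω) j dP(ω) is positive definite. Then the matrix with entries ∫ U(ω) i · U(ω) j dP(ω) minus F⁻¹ is positive semidefinite. -/

import Mathlib

open MeasureTheory Matrix
open scoped InnerProductSpace

/-! The second-moment matrix of a square-integrable random vector is a Gram matrix in `L²(P)`,
hence positive semidefinite. Applied to the stacked vector `(U, V)`, whose second-moment matrix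
is the block matrix `[[E[U Uᵀ], 1], [1, F]]`, positivity of its Schur complement with respect to
the block `F` is exactly `E[U Uᵀ] - F⁻¹ ⪰ 0`. -/

section MomentMatrix

variable {Ω : Type*} [MeasurableSpace Ω] {P : Measure Ω}

noncomputable def momentMatrix (P : Measure Ω) {m n : Type*} (X : Ω → m → ℝ) (Y : Ω → n → ℝ) :
    Matrix m n ℝ :=
  of fun i j => ∫ ω, X ω i * Y ω j ∂P

lemma integral_mul_eq_inner_toLp {f g : Ω → ℝ} (hf : MemLp f 2 P) (hg : MemLp g 2 P) :
    ∫ ω, f ω * g ω ∂P = ⟪hf.toLp f, hg.toLp g⟫_ℝ := by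
  rw [L2.inner_def]
  refine integral_congr_ae ?_
  filter_upwards [hf.coeFn_toLp, hg.coeFn_toLp] with ω hfω hgω
  simp [hfω, hgω, mul_comm]

lemma momentMatrix_eq_gram {n : Type*} (X : Ω → n → ℝ) (hX : ∀ i, MemLp (fun ω => X ω i) 2 P) :
    momentMatrix P X X = gram ℝ fun i => (hX i).toLp := by
  ext i j
  exact integral_mul_eq_inner_toLp (hX i) (hX j)

lemma posSemidef_momentMatrix {n : Type*} [Fintype n] (X : Ω → n → ℝ)
    (hX : ∀ i, MemLp (fun ω => X ω i) 2 P) : (momentMatrix P X X).PosSemidef :=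
  momentMatrix_eq_gram X hX ▸ posSemidef_gram ℝ _

lemma momentMatrix_sumElim {m n : Type*} (X : Ω → m → ℝ) (Y : Ω → n → ℝ) :
    momentMatrix P (fun ω => Sum.elim (X ω) (Y ω)) (fun ω => Sum.elim (X ω) (Y ω)) =
      fromBlocks (momentMatrix P X X) (momentMatrix P X Y) (momentMatrix P X Y)ᴴ
        (momentMatrix P Y Y) := by
  ext (i | i) (j | j) <;> simp [momentMatrix, mul_comm]

end MomentMatrix

theorem cramer_rao_matrix_general {Ω : Type*} [MeasurableSpace Ω]
    (P : Measure Ω) {d : ℕ}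
    (U V : Ω → (Fin d → ℝ))
    (hU : ∀ i, MemLp (fun ω => U ω i) 2 P) (hV : ∀ i, MemLp (fun ω => V ω i) 2 P)
    (hreg : (Matrix.of fun i j : Fin d => ∫ ω, U ω i * V ω j ∂P) = 1)
    (F : Matrix (Fin d) (Fin d) ℝ)
    (hF : F = Matrix.of fun i j : Fin d => ∫ ω, V ω i * V ω j ∂P)
    (hFpd : F.PosDef) :
    ((Matrix.of fun i j : Fin d => ∫ ω, U ω i * U ω j ∂P) - F⁻¹).PosSemidef := by
  have : Invertible F := hFpd.isUnit.invertible
  have hUV : ∀ k, MemLp (fun ω => Sum.elim (U ω) (V ω) k) 2 P := by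
    rintro (i | i)
    exacts [hU i, hV i]
  have hblock := posSemidef_momentMatrix _ hUV
  rw [momentMatrix_sumElim, show momentMatrix P U V = 1 from hreg,
    show momentMatrix P V V = F from hF.symm] at hblock
  have hschur := (PosDef.fromBlocks₂₂ _ 1 hFpd).1 hblock
  rwa [Matrix.one_mul, conjTranspose_one, Matrix.mul_one] at hschur

/-- Matrix Cramér–Rao lower bound: if `E[U Vᵀ] = 1` and the second-moment matrix `F` of `V` is
positive definite, then `E[U Uᵀ] - F⁻¹` is positive semidefinite. -/
theorem cramer_rao_matrix {Ω : Type*} [MeasurableSpace Ω]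
    (P : Measure Ω) [IsProbabilityMeasure P] {d : ℕ}
    (U V : Ω → (Fin d → ℝ))
    (hU : ∀ i, MemLp (fun ω => U ω i) 2 P) (hV : ∀ i, MemLp (fun ω => V ω i) 2 P)
    (hreg : (Matrix.of fun i j : Fin d => ∫ ω, U ω i * V ω j ∂P) = 1)
    (F : Matrix (Fin d) (Fin d) ℝ)
    (hF : F = Matrix.of fun i j : Fin d => ∫ ω, V ω i * V ω j ∂P)
    (hFpd : F.PosDef) :
    ((Matrix.of fun i j : Fin d => ∫ ω, U ω i * U ω j ∂P) - F⁻¹).PosSemidef :=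
  cramer_rao_matrix_general P U V hU hV hreg F hF hFpd
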